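/- arXiv:1106.3653 — 3 statements merged into one kernel-verified Lean document; each statement's English description precedes it below -/
import Mathlib

section
/- Let σ and τ be patterns that are both even-Wilf-equivalent and Wilf-equivalent. Then σʳ and τʳ are even-Wilf-equivalent, and σᶜ and τᶜ are even-Wilf-equivalent. -/
/-!
Reversal and complementation both act on `Sₙ` as multiplication by the reversal permutation
`Fin.revPerm`, so they carry the avoiders of `σ` bijectively onto the avoiders of `σʳ` (resp. `σᶜ`),
multiplying every sign by the fixed sign `c = sign Fin.revPerm`. Hence the even avoiders of `σʳ`
correspond to the avoiders of `σ` of sign `c`. When `c = -1` these are the odd avoiders, counted by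
`sav n σ - eav n σ`, which is why Wilf-equivalence is needed besides even-Wilf-equivalence.
-/

/-- A permutation `π` contains the pattern `σ` if some subsequence of `π`
(given by a strictly increasing choice of indices) is order-isomorphic to `σ`. -/
def Pattern.Contains {k n : ℕ} (σ : Equiv.Perm (Fin k)) (π : Equiv.Perm (Fin n)) : Prop :=
  ∃ f : Fin k → Fin n, StrictMono f ∧ ∀ a b : Fin k, π (f a) < π (f b) ↔ σ a < σ b

/-- `π` avoids the pattern `σ`. -/
def Pattern.Avoids {k n : ℕ} (σ : Equiv.Perm (Fin k)) (π : Equiv.Perm (Fin n)) : Prop :=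
  ¬ Pattern.Contains σ π

/-- `eav n σ`: the number of even permutations of length `n` avoiding `σ`. -/
noncomputable def eav (n : ℕ) {k : ℕ} (σ : Equiv.Perm (Fin k)) : ℕ :=
  Nat.card {π : Equiv.Perm (Fin n) // Equiv.Perm.sign π = 1 ∧ Pattern.Avoids σ π}

/-- Even-Wilf-equivalence: the same number of even avoiders of every length. -/
def EvenWilfEquiv {k l : ℕ} (σ : Equiv.Perm (Fin k)) (τ : Equiv.Perm (Fin l)) : Prop :=
  ∀ n : ℕ, eav n σ = eav n τ


/-- `sav n σ`: the number of all permutations of length `n` avoiding `σ`. -/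
noncomputable def sav (n : ℕ) {k : ℕ} (σ : Equiv.Perm (Fin k)) : ℕ :=
  Nat.card {π : Equiv.Perm (Fin n) // Pattern.Avoids σ π}

/-- Classical Wilf-equivalence. -/
def WilfEquiv {k l : ℕ} (σ : Equiv.Perm (Fin k)) (τ : Equiv.Perm (Fin l)) : Prop :=
  ∀ n : ℕ, sav n σ = sav n τ


/-- The reverse of a permutation: `πʳ(i) = π(n+1-i)` (0-indexed: `πʳ i = π (Fin.rev i)`). -/
def reversePerm {n : ℕ} (π : Equiv.Perm (Fin n)) : Equiv.Perm (Fin n) :=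
  Fin.revPerm.trans π

/-- The complement of a permutation: `πᶜ(i) = n+1-π(i)` (0-indexed: `πᶜ i = Fin.rev (π i)`). -/
def complementPerm {n : ℕ} (π : Equiv.Perm (Fin n)) : Equiv.Perm (Fin n) :=
  π.trans Fin.revPerm

open Equiv

noncomputable def savOfSign (n : ℕ) {k : ℕ} (σ : Perm (Fin k)) (s : ℤˣ) : ℕ :=
  Nat.card {π : Perm (Fin n) // Perm.sign π = s ∧ Pattern.Avoids σ π}

lemma eav_eq_savOfSign_one (n : ℕ) {k : ℕ} (σ : Perm (Fin k)) : eav n σ = savOfSign n σ 1 :=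
  rfl

lemma savOfSign_one_add_savOfSign_neg_one (n : ℕ) {k : ℕ} (σ : Perm (Fin k)) :
    savOfSign n σ 1 + savOfSign n σ (-1) = sav n σ := by
  classical
  simp only [savOfSign, sav, Nat.card_eq_fintype_card, Fintype.card_subtype,
    ← Int.units_ne_iff_eq_neg]
  rw [← Finset.card_filter_add_card_filter_not (s := {π | Pattern.Avoids σ π})
    (fun π => Perm.sign π = 1), Finset.filter_filter, Finset.filter_filter]
  simp only [and_comm]

lemma savOfSign_eq_of_evenWilfEquiv_of_wilfEquiv {k l : ℕ} {σ : Perm (Fin k)} {τ : Perm (Fin l)}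
    (he : EvenWilfEquiv σ τ) (hw : WilfEquiv σ τ) (n : ℕ) (s : ℤˣ) :
    savOfSign n σ s = savOfSign n τ s := by
  rcases Int.units_eq_one_or s with rfl | rfl
  · exact he n
  · have hσ := savOfSign_one_add_savOfSign_neg_one n σ
    have hτ := savOfSign_one_add_savOfSign_neg_one n τ
    rw [← eav_eq_savOfSign_one] at hσ hτ
    have := he n
    have := hw n
    omega

lemma savOfSign_eq_of_equiv {n k k' : ℕ} {σ : Perm (Fin k)} {σ' : Perm (Fin k')}
    (e : Perm (Fin n) ≃ Perm (Fin n)) (c : ℤˣ) (hsign : ∀ π, Perm.sign (e π) = Perm.sign π * c)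
    (hcont : ∀ π, Pattern.Contains σ' (e π) ↔ Pattern.Contains σ π) (s : ℤˣ) :
    savOfSign n σ' s = savOfSign n σ (s * c) := by
  refine (Nat.card_congr (e.subtypeEquiv fun π => ?_)).symm
  rw [hsign, Pattern.Avoids, Pattern.Avoids, hcont, ← eq_mul_inv_iff_mul_eq, Int.units_inv_eq_self]

lemma reversePerm_reversePerm {n : ℕ} (π : Perm (Fin n)) :
    reversePerm (reversePerm π) = π := by
  ext i; simp [reversePerm]

lemma complementPerm_complementPerm {n : ℕ} (π : Perm (Fin n)) :
    complementPerm (complementPerm π) = π := by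
  ext i; simp [complementPerm]

lemma Pattern.Contains.reversePerm {k n : ℕ} {σ : Perm (Fin k)} {π : Perm (Fin n)}
    (h : Pattern.Contains σ π) : Pattern.Contains (reversePerm σ) (reversePerm π) := by
  obtain ⟨f, hf, hfπ⟩ := h
  refine ⟨fun a => (f a.rev).rev, fun a b hab => Fin.rev_lt_rev.mpr (hf (Fin.rev_lt_rev.mpr hab)),
    fun a b => ?_⟩
  simpa [_root_.reversePerm] using hfπ a.rev b.rev

lemma Pattern.Contains.complementPerm {k n : ℕ} {σ : Perm (Fin k)} {π : Perm (Fin n)}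
    (h : Pattern.Contains σ π) : Pattern.Contains (complementPerm σ) (complementPerm π) := by
  obtain ⟨f, hf, hfπ⟩ := h
  refine ⟨f, hf, fun a b => ?_⟩
  simpa [_root_.complementPerm] using hfπ b a

lemma Pattern.contains_reversePerm_reversePerm_iff {k n : ℕ} {σ : Perm (Fin k)}
    {π : Perm (Fin n)} :
    Pattern.Contains (reversePerm σ) (reversePerm π) ↔ Pattern.Contains σ π :=
  ⟨fun h => by simpa only [reversePerm_reversePerm] using h.reversePerm, .reversePerm⟩

lemma Pattern.contains_complementPerm_complementPerm_iff {k n : ℕ} {σ : Perm (Fin k)}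
    {π : Perm (Fin n)} :
    Pattern.Contains (complementPerm σ) (complementPerm π) ↔ Pattern.Contains σ π :=
  ⟨fun h => by simpa only [complementPerm_complementPerm] using h.complementPerm, .complementPerm⟩

lemma savOfSign_reversePerm (n : ℕ) {k : ℕ} (σ : Perm (Fin k)) (s : ℤˣ) :
    savOfSign n (reversePerm σ) s = savOfSign n σ (s * Perm.sign (Fin.revPerm : Perm (Fin n))) :=
  savOfSign_eq_of_equiv (Function.Involutive.toPerm _ reversePerm_reversePerm) _
    (fun π => map_mul Perm.sign π Fin.revPerm)
    (fun _ => Pattern.contains_reversePerm_reversePerm_iff) s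

lemma savOfSign_complementPerm (n : ℕ) {k : ℕ} (σ : Perm (Fin k)) (s : ℤˣ) :
    savOfSign n (complementPerm σ) s =
      savOfSign n σ (s * Perm.sign (Fin.revPerm : Perm (Fin n))) :=
  savOfSign_eq_of_equiv (Function.Involutive.toPerm _ complementPerm_complementPerm) _
    (fun π => (map_mul Perm.sign Fin.revPerm π).trans (mul_comm _ _))
    (fun _ => Pattern.contains_complementPerm_complementPerm_iff) s

/-- If `σ` and `τ` are both even-Wilf-equivalent and Wilf-equivalent then their reverses are
even-Wilf-equivalent and their complements are even-Wilf-equivalent. -/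
theorem stmt3 (k : ℕ) (σ τ : Equiv.Perm (Fin k))
    (h1 : EvenWilfEquiv σ τ) (h2 : WilfEquiv σ τ) :
    EvenWilfEquiv (reversePerm σ) (reversePerm τ) ∧
      EvenWilfEquiv (complementPerm σ) (complementPerm τ) := by
  have hsigned := savOfSign_eq_of_evenWilfEquiv_of_wilfEquiv h1 h2
  refine ⟨fun n => ?_, fun n => ?_⟩
  · simp only [eav_eq_savOfSign_one, savOfSign_reversePerm, hsigned]
  · simp only [eav_eq_savOfSign_one, savOfSign_complementPerm, hsigned]
end

section
/- The patterns 123, 312, and 231 are pairwise even-Wilf-equivalent: for all n ≥ 0, eav_n(123) = eav_n(312) = eav_n(231). -/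
/-- The pattern `123` (one-line notation, 1-indexed). -/
def p123 : Equiv.Perm (Fin 3) :=
  ⟨![0,1,2], ![0,1,2], by decide, by decide⟩

/-- The pattern `312` (one-line notation, 1-indexed). -/
def p312 : Equiv.Perm (Fin 3) :=
  ⟨![2,0,1], ![1,2,0], by decide, by decide⟩

/-- The pattern `231` (one-line notation, 1-indexed). -/
def p231 : Equiv.Perm (Fin 3) :=
  ⟨![1,2,0], ![2,0,1], by decide, by decide⟩

/-!
Twice the number of even avoiders is the number of avoiders plus their signed number, so it
suffices to match both counts for 123 and 312 (and 231 = 312⁻¹, inversion preserving the sign).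
Split a permutation of length `N + 1` as its first entry `v` followed by the standardisation `σ`
of the rest; the sign changes by `(-1) ^ v`. The permutation avoids 123 iff `σ` does and the
entries of `σ` that are `≥ v` decrease; it avoids 312 iff `σ` does and the entries `< v`
decrease.
Refining both counts by the threshold of these conditions gives two triangular recursions, which
are exchanged by `t ↦ N - t`. For plain counts this is immediate; for signed counts it needs a
parity property of the 123-recursion: for odd `N` its values at thresholds `2j` and `2j + 1`
agree, and for even `N ≥ 2` it vanishes at odd thresholds.
-/

namespace EvenWilf

open Equiv Equiv.Perm Finset

variable {n : ℕ}

lemma val_succAbove (p : Fin (n + 1)) (i : Fin n) :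
    (p.succAbove i : ℕ) = if (i : ℕ) < p then (i : ℕ) else (i : ℕ) + 1 := by
  split_ifs with h
  · rw [Fin.succAbove_of_castSucc_lt _ _ (by simpa [Fin.lt_def] using h), Fin.val_castSucc]
  · rw [Fin.succAbove_of_le_castSucc _ _ (by simpa [Fin.le_def] using h), Fin.val_succ]

lemma exists_lt_lt_fin_succ {P : Fin (n + 1) → Fin (n + 1) → Fin (n + 1) → Prop} :
    (∃ i j k, i < j ∧ j < k ∧ P i j k) ↔
      (∃ j k : Fin n, j < k ∧ P 0 j.succ k.succ) ∨
        ∃ i j k : Fin n, i < j ∧ j < k ∧ P i.succ j.succ k.succ := by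
  simp [Fin.exists_fin_succ, Fin.succ_pos]

lemma forall_lt_fin_succ {P : Fin (n + 1) → Fin (n + 1) → Prop} :
    (∀ i j, i < j → P i j) ↔
      (∀ j : Fin n, P 0 j.succ) ∧ ∀ i j : Fin n, i < j → P i.succ j.succ := by
  simp [Fin.forall_fin_succ, Fin.succ_pos]

lemma perm_lt_iff_not_lt {σ : Perm (Fin n)} {i j : Fin n} (h : i < j) :
    σ j < σ i ↔ ¬σ i < σ j :=
  ⟨lt_asymm, fun h' => lt_of_le_of_ne (not_lt.1 h') (σ.injective.ne h.ne')⟩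

lemma sum_fin_ite_lt {M : Type*} [AddCommMonoid M] (f : ℕ → M) {t : ℕ} (ht : t ≤ n) :
    ∑ u : Fin n, (if (u : ℕ) < t then f u else 0) = ∑ u ∈ range t, f u := by
  rw [Fin.sum_univ_eq_sum_range (fun u => if u < t then f u else 0), ← sum_filter, range_eq_Ico,
    Ico_filter_lt, min_eq_right ht, ← range_eq_Ico]

lemma sum_fin_ite_le {M : Type*} [AddCommMonoid M] (f : ℕ → M) (j : ℕ) :
    ∑ v : Fin n, (if j ≤ (v : ℕ) then f v else 0) = ∑ v ∈ Ico j n, f v := by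
  rw [Fin.sum_univ_eq_sum_range (fun v => if j ≤ v then f v else 0), ← sum_filter, range_eq_Ico,
    Ico_filter_le, zero_max]

lemma pow_sub_eq_pow_mul_pow {M : Type*} [CommMonoid M] {c : M} (hc : c * c = 1) {u N : ℕ}
    (h : u ≤ N) : c ^ (N - u) = c ^ N * c ^ u := by
  rw [← Nat.sub_add_cancel h, pow_add, mul_assoc, ← mul_pow, hc, one_pow, mul_one,
    Nat.add_sub_cancel]

lemma sum_range_two_mul_neg_one_pow_mul_eq_zero {a : ℕ → ℤ}
    (h : ∀ j, a (2 * j + 1) = a (2 * j)) (j : ℕ) :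
    ∑ u ∈ range (2 * j), (-1) ^ u * a u = 0 := by
  induction j with
  | zero => simp
  | succ j ih =>
    rw [show 2 * (j + 1) = 2 * j + 1 + 1 by ring, sum_range_succ, sum_range_succ, ih, h, pow_succ,
      pow_mul]
    ring

def consPerm (v : Fin (n + 1)) (σ : Perm (Fin n)) : Perm (Fin (n + 1)) :=
  v.cycleRange.symm * decomposeFin.symm (0, σ)

@[simp] lemma consPerm_apply_zero (v : Fin (n + 1)) (σ : Perm (Fin n)) :
    consPerm v σ 0 = v := by
  simp [consPerm]

@[simp] lemma consPerm_apply_succ (v : Fin (n + 1)) (σ : Perm (Fin n)) (i : Fin n) :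
    consPerm v σ i.succ = v.succAbove (σ i) := by
  simp [consPerm, Fin.cycleRange_symm_succ]

lemma sign_consPerm (v : Fin (n + 1)) (σ : Perm (Fin n)) :
    sign (consPerm v σ) = (-1) ^ (v : ℕ) * sign σ := by
  simp [consPerm, Fin.sign_cycleRange]

lemma consPerm_bijective :
    Function.Bijective (fun p : Fin (n + 1) × Perm (Fin n) => consPerm p.1 p.2) := by
  refine (Fintype.bijective_iff_injective_and_card _).2 ⟨?_, ?_⟩
  · rintro ⟨v, σ⟩ ⟨w, τ⟩ h
    have hvw : v = w := by simpa using congr($h 0)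
    subst hvw
    exact Prod.ext rfl (Equiv.ext fun i => by simpa using congr($h i.succ))
  · simp [Fintype.card_perm, Nat.factorial_succ]

lemma sum_perm_succ {M : Type*} [AddCommMonoid M] (f : Perm (Fin (n + 1)) → M) :
    ∑ π, f π = ∑ v, ∑ σ, f (consPerm v σ) := by
  rw [← Fintype.sum_prod_type']
  exact (Fintype.sum_bijective _ consPerm_bijective _ _ fun _ => rfl).symm

def Has123 (π : Perm (Fin n)) : Prop :=
  ∃ i j k, i < j ∧ j < k ∧ π i < π j ∧ π j < π k

def Has312 (π : Perm (Fin n)) : Prop :=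
  ∃ i j k, i < j ∧ j < k ∧ π j < π k ∧ π k < π i

lemma contains_iff_exists_three {σ : Perm (Fin 3)} {π : Perm (Fin n)} :
    Pattern.Contains σ π ↔
      ∃ i j k, i < j ∧ j < k ∧
        ∀ a b, π (![i, j, k] a) < π (![i, j, k] b) ↔ σ a < σ b := by
  constructor
  · rintro ⟨f, hf, hσ⟩
    refine ⟨f 0, f 1, f 2, hf (by decide), hf (by decide), fun a b => ?_⟩
    convert hσ a b using 3 <;> fin_cases a <;> fin_cases b <;> rfl
  · rintro ⟨i, j, k, hij, hjk, hσ⟩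
    refine ⟨![i, j, k], fun a b hab => ?_, hσ⟩
    fin_cases a <;> fin_cases b <;> simp_all [hij.trans hjk]

lemma contains_p123_iff {π : Perm (Fin n)} : Pattern.Contains p123 π ↔ Has123 π := by
  simp only [contains_iff_exists_three, Has123, Fin.forall_fin_succ]
  refine exists₃_congr fun i j k => and_congr_right fun _ => and_congr_right fun _ => ?_
  simp [p123]
  omega

lemma contains_p312_iff {π : Perm (Fin n)} : Pattern.Contains p312 π ↔ Has312 π := by
  simp only [contains_iff_exists_three, Has312, Fin.forall_fin_succ]
  refine exists₃_congr fun i j k => and_congr_right fun _ => and_congr_right fun _ => ?_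
  simp [p312]
  omega

lemma _root_.Pattern.Contains.inv {k : ℕ} {σ : Perm (Fin k)} {π : Perm (Fin n)}
    (h : Pattern.Contains σ π) : Pattern.Contains σ⁻¹ π⁻¹ := by
  obtain ⟨f, hf, hσ⟩ := h
  refine ⟨fun c => π (f (σ⁻¹ c)), fun a b hab => (hσ _ _).2 (by simpa using hab),
    fun a b => ?_⟩
  simpa using hf.lt_iff_lt

/- Equivalently, the entries `≥ t` (resp. `< t`) of `π` form a decreasing subsequence; the
phrasing matches the negated pattern conditions in `not_has123_consPerm_iff` and
`not_has312_consPerm_iff`. -/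
def DecreasingAbove (π : Perm (Fin n)) (t : ℕ) : Prop :=
  ∀ i j, i < j → t ≤ (π i : ℕ) → π j < π i

def DecreasingBelow (π : Perm (Fin n)) (t : ℕ) : Prop :=
  ∀ i j, i < j → (π j : ℕ) < t → π j < π i

lemma not_has123_consPerm_iff {v : Fin (n + 1)} {σ : Perm (Fin n)} :
    ¬Has123 (consPerm v σ) ↔ ¬Has123 σ ∧ DecreasingAbove σ v := by
  rw [Has123, exists_lt_lt_fin_succ]
  simp only [consPerm_apply_zero, consPerm_apply_succ, Fin.succAbove_lt_succAbove_iff,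
    Fin.lt_succAbove_iff_le_castSucc, not_or]
  refine and_comm.trans (and_congr_right fun _ => ?_)
  simp only [DecreasingAbove, not_exists, not_and]
  refine forall₂_congr fun j k => forall_congr' fun hjk => ?_
  rw [perm_lt_iff_not_lt hjk, Fin.le_def, Fin.val_castSucc]

lemma not_has312_consPerm_iff {v : Fin (n + 1)} {σ : Perm (Fin n)} :
    ¬Has312 (consPerm v σ) ↔ ¬Has312 σ ∧ DecreasingBelow σ v := by
  rw [Has312, exists_lt_lt_fin_succ]
  simp only [consPerm_apply_zero, consPerm_apply_succ, Fin.succAbove_lt_succAbove_iff,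
    Fin.succAbove_lt_iff_castSucc_lt, not_or]
  refine and_comm.trans (and_congr_right fun _ => ?_)
  simp only [DecreasingBelow, not_exists, not_and]
  refine forall₂_congr fun j k => forall_congr' fun hjk => ?_
  rw [perm_lt_iff_not_lt hjk]
  exact imp_not_comm

lemma decreasingAbove_of_le (π : Perm (Fin n)) {t : ℕ} (ht : n ≤ t + 1) :
    DecreasingAbove π t :=
  fun i j hij hi => lt_of_le_of_ne (Fin.le_def.2 (by omega)) (π.injective.ne hij.ne')

lemma decreasingBelow_of_le_one (π : Perm (Fin n)) {t : ℕ} (ht : t ≤ 1) :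
    DecreasingBelow π t :=
  fun i j hij hj => lt_of_le_of_ne (Fin.le_def.2 (by omega)) (π.injective.ne hij.ne')

lemma decreasingAbove_consPerm_castSucc_iff {u : Fin n} {σ : Perm (Fin n)} {t : ℕ}
    (h : DecreasingAbove σ u) : DecreasingAbove (consPerm u.castSucc σ) t ↔ (u : ℕ) < t := by
  rw [DecreasingAbove, forall_lt_fin_succ]
  simp only [consPerm_apply_zero, consPerm_apply_succ, Fin.val_castSucc,
    Fin.succAbove_lt_succAbove_iff]
  constructor
  · rintro ⟨h0, -⟩
    by_contra! htu
    have := h0 (σ⁻¹ u) htu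
    simp [Fin.succAbove_castSucc_self, Fin.lt_def] at this
  · refine fun htu => ⟨fun _ hut => absurd hut (by omega), fun i j hij hi => h i j hij ?_⟩
    rw [val_succAbove] at hi
    split_ifs at hi <;> omega

lemma decreasingAbove_consPerm_last_iff {σ : Perm (Fin n)} {t : ℕ} :
    DecreasingAbove (consPerm (Fin.last n) σ) t ↔ DecreasingAbove σ t := by
  rw [DecreasingAbove, forall_lt_fin_succ]
  simp only [consPerm_apply_zero, consPerm_apply_succ, Fin.succAbove_last, Fin.val_castSucc,
    Fin.castSucc_lt_castSucc_iff, Fin.castSucc_lt_last, implies_true, true_and]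
  rfl

lemma decreasingBelow_consPerm_iff {v : Fin (n + 1)} {σ : Perm (Fin n)} {j : ℕ}
    (h : DecreasingBelow σ v) (hj : j ≤ n) :
    DecreasingBelow (consPerm v σ) (j + 1) ↔ j ≤ v := by
  rw [DecreasingBelow, forall_lt_fin_succ]
  simp only [consPerm_apply_zero, consPerm_apply_succ, Fin.succAbove_lt_succAbove_iff]
  constructor
  · rintro ⟨h0, -⟩
    by_contra! hvj
    have := h0 (σ⁻¹ ⟨v, by omega⟩)
    simp [val_succAbove, Fin.lt_def] at this
    omega
  · intro hjv
    refine ⟨fun k hk => ?_, fun i k hik hk => h i k hik ?_⟩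
    · rw [val_succAbove] at hk
      rw [Fin.lt_def, val_succAbove]
      split_ifs at hk ⊢ <;> omega
    · rw [val_succAbove] at hk
      split_ifs at hk <;> omega

open Classical in
noncomputable def weightedCard (χ : ℤˣ →* ℤ) (P : Perm (Fin n) → Prop) : ℤ :=
  ∑ π, if P π then χ (sign π) else 0

open Classical in
lemma weightedCard_succ (χ : ℤˣ →* ℤ) (P : Perm (Fin (n + 1)) → Prop) :
    weightedCard χ P = ∑ v, ∑ σ, if P (consPerm v σ) then χ (sign (consPerm v σ)) else 0 :=
  sum_perm_succ _

open Classical in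
lemma sum_consPerm_eq_ite (χ : ℤˣ →* ℤ) (v : Fin (n + 1)) (P : Perm (Fin (n + 1)) → Prop)
    {R : Perm (Fin n) → Prop} {b : Prop} [Decidable b]
    (h : ∀ σ, P (consPerm v σ) ↔ R σ ∧ b) :
    ∑ σ, (if P (consPerm v σ) then χ (sign (consPerm v σ)) else 0) =
      if b then χ (-1) ^ (v : ℕ) * weightedCard χ R else 0 := by
  simp only [h, weightedCard, sign_consPerm, map_mul, map_pow, mul_sum]
  split_ifs with hb <;> simp [hb]

noncomputable def count123 (χ : ℤˣ →* ℤ) (N t : ℕ) : ℤ :=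
  weightedCard χ fun π : Perm (Fin N) => ¬Has123 π ∧ DecreasingAbove π t

noncomputable def count312 (χ : ℤˣ →* ℤ) (N t : ℕ) : ℤ :=
  weightedCard χ fun π : Perm (Fin N) => ¬Has312 π ∧ DecreasingBelow π t

lemma count123_succ (χ : ℤˣ →* ℤ) {N t : ℕ} (ht : t ≤ N) :
    count123 χ (N + 1) t =
      ∑ u ∈ range t, χ (-1) ^ u * count123 χ N u + χ (-1) ^ N * count123 χ N t := by
  rw [count123, weightedCard_succ, Fin.sum_univ_castSucc, ← sum_fin_ite_lt _ ht]
  congr 1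
  · refine sum_congr rfl fun u _ => sum_consPerm_eq_ite χ _
      (fun π => ¬Has123 π ∧ DecreasingAbove π t)
      (R := fun σ => ¬Has123 σ ∧ DecreasingAbove σ u) fun σ => ?_
    rw [not_has123_consPerm_iff, Fin.val_castSucc]
    exact and_congr_right fun h => decreasingAbove_consPerm_castSucc_iff h.2
  · rw [sum_consPerm_eq_ite χ _ (fun π => ¬Has123 π ∧ DecreasingAbove π t)
      (R := fun σ => ¬Has123 σ ∧ DecreasingAbove σ t) (b := True) fun σ => ?_,
      if_pos trivial, Fin.val_last, count123]
    have := decreasingAbove_of_le σ (t := N) (by omega)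
    rw [not_has123_consPerm_iff, decreasingAbove_consPerm_last_iff, Fin.val_last]
    tauto

lemma count312_succ (χ : ℤˣ →* ℤ) {N j : ℕ} (hj : j ≤ N) :
    count312 χ (N + 1) (j + 1) = ∑ v ∈ Ico j (N + 1), χ (-1) ^ v * count312 χ N v := by
  rw [count312, weightedCard_succ, ← sum_fin_ite_le]
  refine sum_congr rfl fun v _ => sum_consPerm_eq_ite χ _
    (fun π => ¬Has312 π ∧ DecreasingBelow π (j + 1))
    (R := fun σ => ¬Has312 σ ∧ DecreasingBelow σ v) fun σ => ?_
  rw [not_has312_consPerm_iff]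
  exact and_congr_right fun h => decreasingBelow_consPerm_iff h.2 hj

lemma count123_of_le (χ : ℤˣ →* ℤ) {N t : ℕ} (ht : N ≤ t + 1) :
    count123 χ N t = weightedCard χ fun π : Perm (Fin N) => ¬Has123 π := by
  simp only [count123, decreasingAbove_of_le _ ht, and_true]

lemma count312_of_le_one (χ : ℤˣ →* ℤ) {N t : ℕ} (ht : t ≤ 1) :
    count312 χ N t = weightedCard χ fun π : Perm (Fin N) => ¬Has312 π := by
  simp only [count312, decreasingBelow_of_le_one _ ht, and_true]

lemma count123_zero_eq_count312_zero (χ : ℤˣ →* ℤ) : count123 χ 0 0 = count312 χ 0 0 := by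
  simp [count123, count312, Has123, Has312, DecreasingAbove, DecreasingBelow]

/-- The recursion `count312_succ`, transported to `count123` along `t ↦ N - t`. -/
def SatisfiesDualRecursion (χ : ℤˣ →* ℤ) : Prop :=
  ∀ N k, k ≤ N →
    count123 χ (N + 1) k = χ (-1) ^ N * ∑ u ∈ range (k + 1), χ (-1) ^ u * count123 χ N u

theorem count123_eq_count312 (χ : ℤˣ →* ℤ) (hχ : SatisfiesDualRecursion χ)
    {N k : ℕ} (hk : k ≤ N) : count123 χ N k = count312 χ N (N - k) := by
  induction N generalizing k with
  | zero => rw [Nat.le_zero.1 hk, count123_zero_eq_count312_zero]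
  | succ N ih =>
    have hc : χ (-1) * χ (-1) = 1 := by rw [← map_mul, neg_one_mul, neg_neg, map_one]
    have step : ∀ k ≤ N, count123 χ (N + 1) k = count312 χ (N + 1) (N + 1 - k) := by
      intro k hk
      rw [hχ N k hk, show N + 1 - k = N - k + 1 by omega, count312_succ χ (Nat.sub_le N k),
        sum_Ico_eq_sum_range, show N + 1 - (N - k) = k + 1 by omega, ← sum_range_reflect,
        mul_sum]
      refine sum_congr rfl fun u hu => ?_
      rw [mem_range] at hu
      rw [show k + 1 - 1 - u = k - u by omega, ← mul_assoc,
        ← pow_sub_eq_pow_mul_pow hc (by omega), ih (by omega),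
        show N - (k - u) = N - k + u by omega]
    rcases hk.lt_or_eq with hk | rfl
    · exact step k (by omega)
    · rw [count123_of_le χ (by omega), ← count123_of_le χ (t := N) (by omega), step N le_rfl,
        Nat.add_sub_cancel_left, Nat.sub_self, count312_of_le_one χ le_rfl,
        count312_of_le_one χ zero_le_one]

section SignedRecursion

variable {a : ℕ → ℕ → ℤ}

lemma parity_of_signed_recursion
    (hrec : ∀ N t, t ≤ N →
      a (N + 1) t = ∑ u ∈ range t, (-1) ^ u * a N u + (-1) ^ N * a N t)
    (hsat : ∀ N t, N ≤ t → a (N + 1) t = a (N + 1) N) (N : ℕ) :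
    (Even N → N ≠ 0 → ∀ j, a N (2 * j + 1) = 0) ∧
      (Odd N → ∀ j, a N (2 * j + 1) = a N (2 * j)) := by
  induction N with
  | zero => simp
  | succ N ih =>
    obtain ⟨ih_even, ih_odd⟩ := ih
    rcases Nat.even_or_odd N with hN | hN
    · refine ⟨fun h => absurd h (by simpa [Nat.even_add_one] using hN), fun _ j => ?_⟩
      rcases le_or_gt (2 * j + 1) N with hj | hj
      · rw [hrec N _ hj, hrec N _ (by omega), sum_range_succ, hN.neg_one_pow,
          ih_even hN (by omega) j, pow_mul]
        ring
      · obtain ⟨i, rfl⟩ := hN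
        rw [hsat _ (2 * j + 1) (by omega), hsat _ (2 * j) (by omega)]
    · have hodd : ∀ j, 2 * j + 1 ≤ N → a (N + 1) (2 * j + 1) = 0 := fun j hj => by
        rw [hrec N _ hj, sum_range_succ, sum_range_two_mul_neg_one_pow_mul_eq_zero (ih_odd hN) j,
          hN.neg_one_pow, ih_odd hN j, pow_mul]
        ring
      refine ⟨fun _ _ j => ?_, fun h => absurd h (by simpa [Nat.odd_add_one] using hN)⟩
      rcases le_or_gt (2 * j + 1) N with hj | hj
      · exact hodd j hj
      · obtain ⟨i, rfl⟩ := hN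
        rw [hsat _ _ (by omega), hodd i le_rfl]

lemma dual_of_signed_recursion
    (hrec : ∀ N t, t ≤ N →
      a (N + 1) t = ∑ u ∈ range t, (-1) ^ u * a N u + (-1) ^ N * a N t)
    (hsat : ∀ N t, N ≤ t → a (N + 1) t = a (N + 1) N) {N k : ℕ} (hk : k ≤ N) :
    a (N + 1) k = (-1) ^ N * ∑ u ∈ range (k + 1), (-1) ^ u * a N u := by
  obtain ⟨h_even, h_odd⟩ := parity_of_signed_recursion hrec hsat N
  rw [hrec N k hk, sum_range_succ]
  obtain ⟨j, rfl | rfl⟩ := Nat.even_or_odd' k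
  · rcases Nat.even_or_odd N with hN | hN
    · rw [hN.neg_one_pow, pow_mul]
      ring
    · rw [hN.neg_one_pow, pow_mul, sum_range_two_mul_neg_one_pow_mul_eq_zero (h_odd hN) j]
      ring
  · rcases Nat.even_or_odd N with hN | hN
    · rw [hN.neg_one_pow, h_even hN (by omega) j]
      ring
    · rw [hN.neg_one_pow, sum_range_succ, sum_range_two_mul_neg_one_pow_mul_eq_zero (h_odd hN) j,
        h_odd hN j, pow_succ, pow_mul]
      ring

end SignedRecursion

lemma satisfiesDualRecursion_one : SatisfiesDualRecursion 1 := fun N k hk => by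
  simp only [count123_succ 1 hk, MonoidHom.one_apply, one_pow, one_mul, sum_range_succ]

lemma satisfiesDualRecursion_coeHom : SatisfiesDualRecursion (Units.coeHom ℤ) := by
  have h : Units.coeHom ℤ (-1) = -1 := rfl
  intro N k hk
  rw [h]
  refine dual_of_signed_recursion (fun N t ht => ?_) (fun N t ht => ?_) hk
  · rw [count123_succ _ ht, h]
  · rw [count123_of_le _ (by omega), count123_of_le _ (by omega)]

lemma two_mul_card_even (P : Perm (Fin n) → Prop) :
    2 * (Nat.card {π : Perm (Fin n) // sign π = 1 ∧ P π} : ℤ) =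
      weightedCard 1 P + weightedCard (Units.coeHom ℤ) P := by
  classical
  rw [Nat.card_eq_fintype_card, Fintype.card_subtype, card_eq_sum_ones, Nat.cast_sum, mul_sum,
    sum_filter, weightedCard, weightedCard, ← sum_add_distrib]
  refine sum_congr rfl fun π _ => ?_
  rcases Int.units_eq_one_or (sign π) with h | h <;> by_cases hP : P π <;> simp [h, hP]

lemma weightedCard_avoids_p123 (χ : ℤˣ →* ℤ) (N : ℕ) :
    weightedCard χ (Pattern.Avoids p123 : Perm (Fin N) → Prop) = count123 χ N N := by
  rw [count123_of_le χ (Nat.le_succ N)]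
  congr 1
  ext π
  rw [Pattern.Avoids, contains_p123_iff]

lemma weightedCard_avoids_p312 (χ : ℤˣ →* ℤ) (N : ℕ) :
    weightedCard χ (Pattern.Avoids p312 : Perm (Fin N) → Prop) = count312 χ N 0 := by
  rw [count312_of_le_one χ zero_le_one]
  congr 1
  ext π
  rw [Pattern.Avoids, contains_p312_iff]

theorem eav_p123_eq_eav_p312 (N : ℕ) : eav N p123 = eav N p312 := by
  have key : ∀ χ, SatisfiesDualRecursion χ →
      weightedCard χ (Pattern.Avoids p123 : Perm (Fin N) → Prop) =
        weightedCard χ (Pattern.Avoids p312) := fun χ hχ => by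
    rw [weightedCard_avoids_p123, weightedCard_avoids_p312, count123_eq_count312 χ hχ le_rfl,
      Nat.sub_self]
  have h := two_mul_card_even (Pattern.Avoids p123 : Perm (Fin N) → Prop)
  rw [key 1 satisfiesDualRecursion_one, key _ satisfiesDualRecursion_coeHom,
    ← two_mul_card_even] at h
  exact_mod_cast (mul_left_cancel₀ two_ne_zero h : _)

theorem eav_p312_eq_eav_p231 (N : ℕ) : eav N p312 = eav N p231 := by
  have hinv : p312⁻¹ = p231 := by decide
  refine Nat.card_congr (Equiv.subtypeEquiv (Equiv.inv _) fun π => and_congr (by simp) ?_)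
  refine not_congr ⟨fun h => hinv ▸ h.inv, fun h => ?_⟩
  simpa [← hinv] using h.inv

end EvenWilf

/-- The patterns 123, 312, 231 are pairwise even-Wilf-equivalent. -/
theorem stmt7 :
    (∀ n : ℕ, eav n p123 = eav n p312) ∧
      (∀ n : ℕ, eav n p123 = eav n p231) ∧
      (∀ n : ℕ, eav n p312 = eav n p231) :=
  ⟨EvenWilf.eav_p123_eq_eav_p312, fun n => (EvenWilf.eav_p123_eq_eav_p312 n).trans
    (EvenWilf.eav_p312_eq_eav_p231 n), EvenWilf.eav_p312_eq_eav_p231⟩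
end

section
/- Let α and β be patterns of the same length that are both even-shape-Wilf-equivalent and shape-Wilf-equivalent. Then for every pattern σ, the patterns α⊕σ and β⊕σ are even-shape-Wilf-equivalent. -/
/-- A transversal `π` of the Young diagram with row lengths `lam` (row `v`, 0-indexed, has
`lam v` cells) contains the pattern `σ` if some strictly increasing choice of columns carries
an order-isomorphic copy of `σ` whose rows and columns all lie in a full `k × k` square of
cells of the diagram: every cell `(row π (f b), column f a)` belongs to the diagram. -/
def TransversalContains {n k : ℕ} (lam : Fin n → ℕ) (σ : Equiv.Perm (Fin k))
    (π : Equiv.Perm (Fin n)) : Prop :=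
  ∃ f : Fin k → Fin n, StrictMono f ∧ (∀ a b : Fin k, π (f a) < π (f b) ↔ σ a < σ b) ∧
    ∀ a b : Fin k, (f a : ℕ) + 1 ≤ lam (π (f b))

/-- `π` is a transversal of the Young diagram with row lengths `lam`: the point of each
value `v` lies in a cell of row `v`, i.e. `π⁻¹(v) ≤ λ_v` (1-indexed). -/
def IsTransversal {n : ℕ} (lam : Fin n → ℕ) (π : Equiv.Perm (Fin n)) : Prop :=
  ∀ v : Fin n, (π.symm v : ℕ) + 1 ≤ lam v

/-- The number of even transversals of the Young diagram `lam` avoiding `σ`. -/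
noncomputable def eavShape {n k : ℕ} (lam : Fin n → ℕ) (σ : Equiv.Perm (Fin k)) : ℕ :=
  Nat.card {π : Equiv.Perm (Fin n) //
    IsTransversal lam π ∧ Equiv.Perm.sign π = 1 ∧ ¬ TransversalContains lam σ π}

/-- The number of all transversals of the Young diagram `lam` avoiding `σ`. -/
noncomputable def savShape {n k : ℕ} (lam : Fin n → ℕ) (σ : Equiv.Perm (Fin k)) : ℕ :=
  Nat.card {π : Equiv.Perm (Fin n) //
    IsTransversal lam π ∧ ¬ TransversalContains lam σ π}

/-- Even-shape-Wilf-equivalence: equal counts of even avoiding transversals for every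
Young diagram (an antitone sequence of row lengths). -/
def EvenShapeWilfEquiv {k : ℕ} (σ τ : Equiv.Perm (Fin k)) : Prop :=
  ∀ (n : ℕ) (lam : Fin n → ℕ), Antitone lam → eavShape lam σ = eavShape lam τ

/-- Shape-Wilf-equivalence: equal counts of avoiding transversals for every Young diagram. -/
def ShapeWilfEquiv {k : ℕ} (σ τ : Equiv.Perm (Fin k)) : Prop :=
  ∀ (n : ℕ) (lam : Fin n → ℕ), Antitone lam → savShape lam σ = savShape lam τ

/-- The direct sum `α ⊕ σ`: `α` acting on the first `k` letters and a shifted copy of `σ`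
acting on the last `m` letters. -/
def directSum {k m : ℕ} (α : Equiv.Perm (Fin k)) (σ : Equiv.Perm (Fin m)) :
    Equiv.Perm (Fin (k + m)) :=
  finSumFinEquiv.symm.trans ((Equiv.sumCongr α σ).trans finSumFinEquiv)

/-!
Call a cell of the diagram white for a transversal `π` if some copy of `σ` in `π` lies strictly
north-east of it, inside the diagram. Then `π` contains `α ⊕ σ` exactly when it contains a copy
of `α` all of whose cells are white. The points of `π` in non-white cells (its outside data)
already determine which cells are white, and the transversals with given outside data correspond
bijectively to the transversals `ρ` of the Young diagram formed by the white cells in the rows and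
columns not used by outside points. Under this correspondence `π` avoids `α ⊕ σ` iff `ρ` avoids
`α`, and `sign π = ε * sign ρ` for a sign `ε` fixed by the outside data. As `α` and `β` have equally
many even and equally many odd avoiding transversals in every diagram, every class of outside data
contributes equally to the counts for `α ⊕ σ` and `β ⊕ σ`.
-/

open Equiv Finset

theorem Nat.card_subtype_eq_sum_card_fiber {X D : Type*} [Fintype X] [Fintype D] (P : X → Prop)
    (Φ : X → D) : Nat.card {x // P x} = ∑ d, Nat.card {x // P x ∧ Φ x = d} := by
  rw [← Nat.card_sigma]
  exact Nat.card_congr <| (Equiv.sigmaFiberEquiv fun x : {x // P x} => Φ x).symm.trans <|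
    Equiv.sigmaCongrRight fun d => Equiv.subtypeSubtypeEquivSubtypeInter P (Φ · = d)

theorem Fin.lt_card_filter_iff_of_antitone {t : ℕ} {P : Fin t → Prop} [DecidablePred P]
    (hP : Antitone P) (j : Fin t) : (j : ℕ) < #{i | P i} ↔ P j := by
  constructor
  · intro hj
    by_contra hPj
    have : ({i | P i} : Finset (Fin t)) ⊆ Iio j := fun i hi => by
      simp only [mem_filter, mem_univ, true_and] at hi
      exact mem_Iio.2 (lt_of_not_ge fun hji => hPj (hP hji hi))
    have := card_le_card this
    rw [Fin.card_Iio] at this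
    omega
  · intro hPj
    have : Iic j ⊆ ({i | P i} : Finset (Fin t)) := fun i hi => by
      simpa using hP (mem_Iic.1 hi) hPj
    have := card_le_card this
    rw [Fin.card_Iic] at this
    omega

namespace ShapeWilf

variable {n k m : ℕ}

/-- The copy has its `a`-th point in column `g a` and row `w a`; the last clause puts the whole
square spanned by the copy inside the diagram. -/
def IsCopy (lam : Fin n → ℕ) (σ : Perm (Fin m)) (g w : Fin m → Fin n) : Prop :=
  StrictMono g ∧ (∀ a b, w a < w b ↔ σ a < σ b) ∧ ∀ a b, (g a : ℕ) + 1 ≤ lam (w b)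

theorem transversalContains_iff {lam : Fin n → ℕ} {σ : Perm (Fin m)} {π : Perm (Fin n)} :
    TransversalContains lam σ π ↔ ∃ g, IsCopy lam σ g (π ∘ g) :=
  Iff.rfl

theorem isTransversal_iff {lam : Fin n → ℕ} {π : Perm (Fin n)} :
    IsTransversal lam π ↔ ∀ c : Fin n, (c : ℕ) + 1 ≤ lam (π c) :=
  ⟨fun h c => by simpa using h (π c), fun h v => by simpa using h (π.symm v)⟩

@[simp]
theorem directSum_castAdd (α : Perm (Fin k)) (σ : Perm (Fin m)) (a : Fin k) :
    directSum α σ (Fin.castAdd m a) = Fin.castAdd m (α a) := by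
  simp [directSum]

@[simp]
theorem directSum_natAdd (α : Perm (Fin k)) (σ : Perm (Fin m)) (x : Fin m) :
    directSum α σ (Fin.natAdd k x) = Fin.natAdd k (σ x) := by
  simp [directSum]

@[simp]
theorem castAdd_lt_natAdd (a : Fin k) (x : Fin m) : Fin.castAdd m a < Fin.natAdd k x := by
  simp [Fin.lt_def]; omega

@[simp]
theorem castAdd_lt_castAdd_iff {a b : Fin k} : Fin.castAdd m a < Fin.castAdd m b ↔ a < b :=
  Iff.rfl

@[simp]
theorem not_natAdd_lt_castAdd (a : Fin k) (x : Fin m) : ¬ Fin.natAdd k x < Fin.castAdd m a :=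
  not_lt.2 (castAdd_lt_natAdd a x).le

theorem isCopy_directSum_iff {lam : Fin n → ℕ} (hlam : Antitone lam) {α : Perm (Fin k)}
    {σ : Perm (Fin m)} {g w : Fin (k + m) → Fin n} :
    IsCopy lam (directSum α σ) g w ↔
      IsCopy lam α (g ∘ Fin.castAdd m) (w ∘ Fin.castAdd m) ∧
      IsCopy lam σ (g ∘ Fin.natAdd k) (w ∘ Fin.natAdd k) ∧
      ∀ a x, g (Fin.castAdd m a) < g (Fin.natAdd k x) ∧
        w (Fin.castAdd m a) < w (Fin.natAdd k x) := by
  constructor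
  · rintro ⟨hg, hw, hcell⟩
    refine ⟨⟨hg.comp (Fin.strictMono_castAdd m), fun a b => ?_, fun a b => hcell _ _⟩,
      ⟨hg.comp (Fin.strictMono_natAdd k), fun x y => ?_, fun x y => hcell _ _⟩,
      fun a x => ⟨hg (castAdd_lt_natAdd a x), (hw _ _).2 (by simp)⟩⟩
    · simpa using hw (.castAdd m a) (.castAdd m b)
    · simpa using hw (.natAdd k x) (.natAdd k y)
  · rintro ⟨⟨hge, hwe, hce⟩, ⟨hgs, hws, hcs⟩, hcross⟩
    refine ⟨fun i j hij => ?_, fun i j => ?_, fun i j => ?_⟩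
    · cases i using Fin.addCases <;> cases j using Fin.addCases
      · exact hge hij
      · exact (hcross _ _).1
      · simp at hij
      · exact hgs (by simpa using hij)
    · cases i using Fin.addCases <;> cases j using Fin.addCases
      · simpa using hwe _ _
      · simpa using (hcross _ _).2
      · simpa using (hcross _ _).2.le
      · simpa using hws _ _
    · cases i using Fin.addCases with
      | left a => cases j using Fin.addCases with
        | left b => exact hce a b
        | right y =>
          have hay : (g (Fin.castAdd m a) : ℕ) < g (Fin.natAdd k y) := (hcross a y).1
          have := hcs y y
          simp only [Function.comp_apply] at this
          omega
      | right x => cases j using Fin.addCases with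
        | left b => exact (hcs x x).trans (hlam (hcross b x).2.le)
        | right y => exact hcs x y

variable {lam : Fin n → ℕ} {σ : Perm (Fin m)}

/-- `F` is a partial permutation, column ↦ row; a permutation `π` enters as `some ∘ π`. -/
def IsWhite (lam : Fin n → ℕ) (σ : Perm (Fin m)) (F : Fin n → Option (Fin n)) (v c : Fin n) :
    Prop :=
  (c : ℕ) + 1 ≤ lam v ∧
    ∃ g w, (∀ x, F (g x) = some (w x)) ∧ IsCopy lam σ g w ∧ ∀ x, c < g x ∧ v < w x

theorem IsWhite.mono {F G : Fin n → Option (Fin n)} (hFG : ∀ c v, F c = some v → G c = some v)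
    {v c : Fin n} (h : IsWhite lam σ F v c) : IsWhite lam σ G v c := by
  obtain ⟨hcell, g, w, hF, hcopy, hne⟩ := h
  exact ⟨hcell, g, w, fun x => hFG _ _ (hF x), hcopy, hne⟩

theorem IsWhite.anti (hlam : Antitone lam) {F : Fin n → Option (Fin n)} {v c v' c' : Fin n}
    (hv : v' ≤ v) (hc : c' ≤ c) (h : IsWhite lam σ F v c) : IsWhite lam σ F v' c' := by
  obtain ⟨hcell, g, w, hF, hcopy, hne⟩ := h
  refine ⟨?_, g, w, hF, hcopy, fun x => ⟨hc.trans_lt (hne x).1, hv.trans_lt (hne x).2⟩⟩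
  have : (c' : ℕ) ≤ c := hc
  have := hlam hv
  omega

open Classical in
noncomputable def outside (lam : Fin n → ℕ) (σ : Perm (Fin m)) (π : Perm (Fin n)) :
    Fin n → Option (Fin n) :=
  fun c => if IsWhite lam σ (some ∘ π) (π c) c then none else some (π c)

theorem outside_eq_none_iff {π : Perm (Fin n)} {c : Fin n} :
    outside lam σ π c = none ↔ IsWhite lam σ (some ∘ π) (π c) c := by
  unfold outside; split_ifs <;> simp_all

theorem outside_eq_some_iff {π : Perm (Fin n)} {c v : Fin n} :
    outside lam σ π c = some v ↔ π c = v ∧ ¬ IsWhite lam σ (some ∘ π) (π c) c := by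
  unfold outside; split_ifs <;> simp_all

theorem isWhite_outside_iff {π : Perm (Fin n)} {v c : Fin n} :
    IsWhite lam σ (outside lam σ π) v c ↔ IsWhite lam σ (some ∘ π) v c := by
  refine ⟨IsWhite.mono fun c v h => by simp [(outside_eq_some_iff.1 h).1], ?_⟩
  rintro ⟨hcell, hcopy⟩
  refine ⟨hcell, ?_⟩
  cases m with
  | zero =>
    obtain ⟨g, w, -, hgw, hne⟩ := hcopy
    exact ⟨g, w, finZeroElim, hgw, hne⟩
  | succ m =>
    classical
    let copies := univ.filter fun p : (Fin (m + 1) → Fin n) × (Fin (m + 1) → Fin n) =>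
      (∀ x, (some ∘ π) (p.1 x) = some (p.2 x)) ∧ IsCopy lam σ p.1 p.2 ∧
        ∀ x, c < p.1 x ∧ v < p.2 x
    have hne : copies.Nonempty := by
      obtain ⟨g, w, h⟩ := hcopy
      exact ⟨(g, w), by simpa [copies] using h⟩
    -- A copy whose leftmost column is as far right as possible has no white point.
    obtain ⟨⟨g, w⟩, hmem, hmax⟩ := copies.exists_max_image (fun p => p.1 0) hne
    simp only [copies, mem_filter, mem_univ, true_and] at hmem hmax
    obtain ⟨hπ, hgw, hne⟩ := hmem
    refine ⟨g, w, fun x => outside_eq_some_iff.2 ⟨by simpa using hπ x, fun hwhite => ?_⟩, hgw, hne⟩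
    obtain ⟨-, g', w', hπ', hgw', hne'⟩ := hwhite
    have hπx : π (g x) = w x := by simpa using hπ x
    have := hmax (g', w') ⟨hπ', hgw', fun y =>
      ⟨(hne x).1.trans (hne' y).1, (hne x).2.trans (hπx ▸ (hne' y).2)⟩⟩
    exact absurd this (not_le.2 ((hgw.1.monotone (Fin.zero_le x)).trans_lt (hne' 0).1))

theorem transversalContains_directSum_iff (hlam : Antitone lam) (hk : 0 < k)
    {α : Perm (Fin k)} {π : Perm (Fin n)} :
    TransversalContains lam (directSum α σ) π ↔
      ∃ e : Fin k → Fin n, StrictMono e ∧ (∀ a b, π (e a) < π (e b) ↔ α a < α b) ∧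
        ∀ a b, IsWhite lam σ (some ∘ π) (π (e b)) (e a) := by
  constructor
  · rintro ⟨f, hf⟩
    obtain ⟨⟨he, hiso, hcell⟩, hσ, hcross⟩ := (isCopy_directSum_iff hlam).1 hf
    exact ⟨f ∘ Fin.castAdd m, he, hiso, fun a b => ⟨hcell a b, f ∘ Fin.natAdd k,
      π ∘ f ∘ Fin.natAdd k, fun x => rfl, hσ, fun x => ⟨(hcross a x).1, (hcross b x).2⟩⟩⟩
  · rintro ⟨e, he, hiso, hwhite⟩
    have : Nonempty (Fin k) := ⟨⟨0, hk⟩⟩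
    obtain ⟨a₁, ha₁⟩ := Finite.exists_max e
    obtain ⟨b₁, hb₁⟩ := Finite.exists_max (π ∘ e)
    -- The σ-copy north-east of the cell (top row of the α-copy, last column) completes it.
    obtain ⟨-, g, w, hπ, hσ, hne⟩ := hwhite a₁ b₁
    obtain rfl : w = π ∘ g := funext fun x => by simpa [eq_comm] using hπ x
    refine ⟨Fin.append e g, (isCopy_directSum_iff hlam).2 ⟨?_, ?_, fun a x => ?_⟩⟩
    · simpa [Function.comp_def] using ⟨he, hiso, fun a b => (hwhite a b).1⟩
    · simpa [Function.comp_def] using hσ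
    · simpa using ⟨(ha₁ a).trans_lt (hne x).1, (hb₁ a).trans_lt (hne x).2⟩

noncomputable def eavFiber (lam : Fin n → ℕ) (σ : Perm (Fin m)) (γ : Perm (Fin k))
    (F : Fin n → Option (Fin n)) : ℕ :=
  Nat.card {π : Perm (Fin n) // (IsTransversal lam π ∧ Perm.sign π = 1 ∧
    ¬ TransversalContains lam γ π) ∧ outside lam σ π = F}

theorem eavShape_eq_sum_eavFiber (lam : Fin n → ℕ) (σ : Perm (Fin m)) (γ : Perm (Fin k)) :
    eavShape lam γ = ∑ F, eavFiber lam σ γ F :=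
  Nat.card_subtype_eq_sum_card_fiber _ _

noncomputable def savOfSign (lam : Fin n → ℕ) (γ : Perm (Fin k)) (ε : ℤˣ) : ℕ :=
  Nat.card {π : Perm (Fin n) //
    IsTransversal lam π ∧ Perm.sign π = ε ∧ ¬ TransversalContains lam γ π}

theorem eavShape_eq_savOfSign (lam : Fin n → ℕ) (γ : Perm (Fin k)) :
    eavShape lam γ = savOfSign lam γ 1 :=
  rfl

theorem savShape_eq_add (lam : Fin n → ℕ) (γ : Perm (Fin k)) :
    savShape lam γ = savOfSign lam γ 1 + savOfSign lam γ (-1) := by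
  rw [savShape, Nat.card_subtype_eq_sum_card_fiber _ Perm.sign,
    show (univ : Finset ℤˣ) = {1, -1} by decide, sum_pair (by decide)]
  congr 1 <;> exact Nat.card_congr (Equiv.subtypeEquivRight fun π => by tauto)

theorem savOfSign_eq_of_wilfEquiv {α β : Perm (Fin k)} (h1 : EvenShapeWilfEquiv α β)
    (h2 : ShapeWilfEquiv α β) {lam : Fin n → ℕ} (hlam : Antitone lam) (ε : ℤˣ) :
    savOfSign lam α ε = savOfSign lam β ε := by
  have heven := h1 n lam hlam
  rcases Int.units_eq_one_or ε with rfl | rfl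
  · exact heven
  · have hall := h2 n lam hlam
    rw [savShape_eq_add, savShape_eq_add] at hall
    rw [eavShape_eq_savOfSign, eavShape_eq_savOfSign] at heven
    omega

/-- Stands for the class of transversals whose outside data is that of `base`. -/
structure Fiber (lam : Fin n → ℕ) (σ : Perm (Fin m)) where
  base : Perm (Fin n)
  isTransversal_base : IsTransversal lam base

namespace Fiber

variable (S : Fiber lam σ)

noncomputable abbrev out : Fin n → Option (Fin n) := outside lam σ S.base

noncomputable def cols : Finset (Fin n) := {c | S.out c = none}

noncomputable def rows : Finset (Fin n) := {v | ∀ c, S.out c ≠ some v}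

variable {S}

theorem mem_cols {c : Fin n} : c ∈ S.cols ↔ S.out c = none := by simp [cols]

theorem mem_cols_iff_isWhite {c : Fin n} : c ∈ S.cols ↔ IsWhite lam σ S.out (S.base c) c := by
  rw [mem_cols, outside_eq_none_iff, isWhite_outside_iff]

theorem out_eq_some_of_not_mem {c : Fin n} (hc : c ∉ S.cols) : S.out c = some (S.base c) := by
  rw [mem_cols, outside_eq_none_iff] at hc
  exact outside_eq_some_iff.2 ⟨rfl, hc⟩

theorem base_mem_rows_iff {c : Fin n} : S.base c ∈ S.rows ↔ c ∈ S.cols := by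
  simp only [rows, mem_filter, mem_univ, true_and, ne_eq, outside_eq_some_iff,
    EmbeddingLike.apply_eq_iff_eq, not_and, not_not, forall_eq, mem_cols, outside_eq_none_iff]

variable (S)

theorem card_rows : #S.rows = #S.cols := by
  have : S.rows = S.cols.map S.base.toEmbedding := by
    ext v
    rw [mem_map_equiv]
    simpa using base_mem_rows_iff (S := S) (c := S.base.symm v)
  rw [this, card_map]

noncomputable def size : ℕ := #S.cols

noncomputable def colIso : Fin S.size ≃o S.cols := S.cols.orderIsoOfFin rfl

noncomputable def rowIso : Fin S.size ≃o S.rows := S.rows.orderIsoOfFin S.card_rows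

open Classical in
noncomputable def shape (i : Fin S.size) : ℕ :=
  #{j | IsWhite lam σ S.out (S.rowIso i) (S.colIso j)}

variable {S}

theorem lt_shape_iff (hlam : Antitone lam) {i j : Fin S.size} :
    (j : ℕ) < S.shape i ↔ IsWhite lam σ S.out (S.rowIso i) (S.colIso j) := by
  classical
  exact Fin.lt_card_filter_iff_of_antitone
    (fun _ _ hj => IsWhite.anti hlam le_rfl (S.colIso.monotone hj)) j

theorem shape_antitone (hlam : Antitone lam) : Antitone S.shape := fun _ _ hi => by
  classical
  exact card_le_card <| monotone_filter_right _ fun _ _ =>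
    IsWhite.anti hlam (S.rowIso.monotone hi) le_rfl

variable (S)

noncomputable def baseInner : Perm (Fin S.size) :=
  S.colIso.toEquiv.trans <|
    (S.base.subtypeEquiv fun _ => base_mem_rows_iff.symm).trans S.rowIso.symm.toEquiv

theorem base_colIso (j : Fin S.size) : S.base (S.colIso j) = S.rowIso (S.baseInner j) := by
  simp [baseInner]

/-- Multiplying by `baseInner⁻¹` first is what makes `lift ρ (colIso j) = rowIso (ρ j)`. -/
noncomputable def liftEquiv :
    Perm (Fin S.size) ≃ {π : Perm (Fin n) // ∀ c ∉ S.cols, π c = S.base c} :=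
  (Equiv.mulLeft S.baseInner⁻¹).trans <| S.colIso.toEquiv.permCongr.trans <|
    (Perm.subtypeEquivSubtypePerm (· ∈ S.cols)).trans <|
      (Equiv.mulLeft S.base).subtypeEquiv fun δ => by simp [Perm.mul_apply]

noncomputable def lift (ρ : Perm (Fin S.size)) : Perm (Fin n) := S.liftEquiv ρ

theorem lift_apply_colIso (ρ : Perm (Fin S.size)) (j : Fin S.size) :
    S.lift ρ (S.colIso j) = S.rowIso (ρ j) := by
  simp [lift, liftEquiv, base_colIso]

theorem lift_apply_of_not_mem (ρ : Perm (Fin S.size)) {c : Fin n} (hc : c ∉ S.cols) :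
    S.lift ρ c = S.base c :=
  (S.liftEquiv ρ).2 c hc

theorem sign_lift (ρ : Perm (Fin S.size)) :
    Perm.sign (S.lift ρ) = Perm.sign S.base * Perm.sign S.baseInner * Perm.sign ρ := by
  simp [lift, liftEquiv, Perm.sign_ofSubtype, mul_assoc]

theorem lift_injective : Function.Injective S.lift :=
  Subtype.val_injective.comp S.liftEquiv.injective

theorem exists_lift_eq {π : Perm (Fin n)} (hπ : ∀ c ∉ S.cols, π c = S.base c) :
    ∃ ρ, S.lift ρ = π :=
  ⟨S.liftEquiv.symm ⟨π, hπ⟩, by simp [lift]⟩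

variable {S}

theorem isWhite_iff_of_agree {π : Perm (Fin n)} (hagree : ∀ c ∉ S.cols, π c = S.base c)
    (hin : ∀ c ∈ S.cols, IsWhite lam σ S.out (π c) c) (v c : Fin n) :
    IsWhite lam σ (some ∘ π) v c ↔ IsWhite lam σ S.out v c := by
  have hsub : ∀ c v, S.out c = some v → (some ∘ π) c = some v := fun c v hc => by
    have hc' : c ∉ S.cols := by simp [mem_cols, hc]
    simpa [hagree c hc', out_eq_some_of_not_mem hc'] using hc
  refine ⟨fun h => (isWhite_outside_iff.2 h).mono fun c' v' hc' => ?_, IsWhite.mono hsub⟩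
  -- Points of `π` that are not white for `π` lie outside the white columns of the fibre.
  obtain ⟨rfl, hnw⟩ := outside_eq_some_iff.1 hc'
  have hc : c' ∉ S.cols := fun hc => hnw ((hin c' hc).mono hsub)
  rw [out_eq_some_of_not_mem hc, hagree c' hc]

theorem isTransversal_and_outside_eq_iff {π : Perm (Fin n)} :
    IsTransversal lam π ∧ outside lam σ π = S.out ↔
      (∀ c ∉ S.cols, π c = S.base c) ∧ ∀ c ∈ S.cols, IsWhite lam σ S.out (π c) c := by
  constructor
  · rintro ⟨-, hout⟩
    refine ⟨fun c hc => ?_, fun c hc => ?_⟩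
    · have := out_eq_some_of_not_mem hc
      rw [← hout, outside_eq_some_iff] at this
      exact this.1
    · rw [mem_cols, ← hout, outside_eq_none_iff, ← isWhite_outside_iff, hout] at hc
      exact hc
  · rintro ⟨hagree, hin⟩
    have hwhite := isWhite_iff_of_agree hagree hin
    refine ⟨isTransversal_iff.2 fun c => ?_, funext fun c => ?_⟩
    · by_cases hc : c ∈ S.cols
      · exact (hin c hc).1
      · rw [hagree c hc]
        exact isTransversal_iff.1 S.isTransversal_base c
    · by_cases hc : c ∈ S.cols
      · rw [mem_cols.1 hc, outside_eq_none_iff, hwhite]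
        exact hin c hc
      · rw [out_eq_some_of_not_mem hc, outside_eq_some_iff, hwhite, hagree c hc,
          ← mem_cols_iff_isWhite]
        exact ⟨rfl, hc⟩

theorem isTransversal_lift_iff (hlam : Antitone lam) {ρ : Perm (Fin S.size)} :
    IsTransversal lam (S.lift ρ) ∧ outside lam σ (S.lift ρ) = S.out ↔
      IsTransversal S.shape ρ := by
  rw [isTransversal_and_outside_eq_iff, isTransversal_iff]
  rw [and_iff_right fun c hc => S.lift_apply_of_not_mem ρ hc]
  refine ⟨fun h j => ?_, fun h c hc => ?_⟩
  · have := h (S.colIso j) (S.colIso j).2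
    rwa [lift_apply_colIso, ← lt_shape_iff hlam] at this
  · obtain ⟨j, rfl⟩ : ∃ j, (S.colIso j : Fin n) = c := ⟨S.colIso.symm ⟨c, hc⟩, by simp⟩
    rw [lift_apply_colIso, ← lt_shape_iff hlam]
    exact h j

theorem transversalContains_lift_iff (hlam : Antitone lam) (hk : 0 < k) {γ : Perm (Fin k)}
    {ρ : Perm (Fin S.size)} (hρ : IsTransversal S.shape ρ) :
    TransversalContains lam (directSum γ σ) (S.lift ρ) ↔ TransversalContains S.shape γ ρ := by
  obtain ⟨hagree, hin⟩ := isTransversal_and_outside_eq_iff.1 ((isTransversal_lift_iff hlam).2 hρ)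
  rw [transversalContains_directSum_iff hlam hk, transversalContains_iff]
  simp only [isWhite_iff_of_agree hagree hin]
  have hcopy : ∀ f : Fin k → Fin S.size,
      (StrictMono (fun a => (S.colIso (f a) : Fin n)) ∧
        (∀ a b, S.lift ρ (S.colIso (f a)) < S.lift ρ (S.colIso (f b)) ↔ γ a < γ b) ∧
        ∀ a b, IsWhite lam σ S.out (S.lift ρ (S.colIso (f b))) (S.colIso (f a))) ↔
      IsCopy S.shape γ f (ρ ∘ f) := fun f => by
    simp only [lift_apply_colIso, Subtype.coe_lt_coe, OrderIso.lt_iff_lt, ← lt_shape_iff hlam,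
      IsCopy, StrictMono, Function.comp_apply, Nat.lt_iff_add_one_le]
  constructor
  · rintro ⟨e, he⟩
    have hmem : ∀ a, e a ∈ S.cols := fun a => by
      by_contra hc
      have := he.2.2 a a
      rw [lift_apply_of_not_mem _ _ hc, ← mem_cols_iff_isWhite] at this
      exact hc this
    obtain ⟨f, rfl⟩ : ∃ f : Fin k → Fin S.size, (fun a => (S.colIso (f a) : Fin n)) = e :=
      ⟨fun a => S.colIso.symm ⟨e a, hmem a⟩, funext fun a => by simp⟩
    exact ⟨f, (hcopy f).1 he⟩
  · rintro ⟨f, hf⟩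
    exact ⟨_, (hcopy f).2 hf⟩

theorem eavFiber_directSum_eq (hlam : Antitone lam) (hk : 0 < k) (γ : Perm (Fin k)) :
    eavFiber lam σ (directSum γ σ) S.out =
      savOfSign S.shape γ (Perm.sign S.base * Perm.sign S.baseInner) := by
  have hmem : ∀ ρ, (IsTransversal S.shape ρ ∧
      Perm.sign ρ = Perm.sign S.base * Perm.sign S.baseInner ∧
      ¬ TransversalContains S.shape γ ρ) ↔ ((IsTransversal lam (S.lift ρ) ∧
      Perm.sign (S.lift ρ) = 1 ∧ ¬ TransversalContains lam (directSum γ σ) (S.lift ρ)) ∧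
      outside lam σ (S.lift ρ) = S.out) := fun ρ => by
    rw [sign_lift, mul_eq_one_iff_eq_inv', Int.units_inv_eq_self]
    constructor
    · rintro ⟨hρ, hsign, havoid⟩
      obtain ⟨hT, hout⟩ := (isTransversal_lift_iff hlam).2 hρ
      exact ⟨⟨hT, hsign, (transversalContains_lift_iff hlam hk hρ).not.2 havoid⟩, hout⟩
    · rintro ⟨⟨hT, hsign, havoid⟩, hout⟩
      have hρ := (isTransversal_lift_iff hlam).1 ⟨hT, hout⟩
      exact ⟨hρ, hsign, (transversalContains_lift_iff hlam hk hρ).not.1 havoid⟩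
  refine (Nat.card_eq_of_bijective (fun ρ => ⟨S.lift ρ, (hmem ρ).1 ρ.2⟩)
    ⟨fun ρ ρ' h => Subtype.ext <| S.lift_injective <| by simpa using h, fun π => ?_⟩).symm
  obtain ⟨ρ, hρ⟩ := S.exists_lift_eq (isTransversal_and_outside_eq_iff.1 ⟨π.2.1.1, π.2.2⟩).1
  exact ⟨⟨ρ, (hmem ρ).2 (hρ ▸ π.2)⟩, Subtype.ext hρ⟩

end Fiber

theorem eavFiber_directSum_eq_of_wilfEquiv {α β : Perm (Fin k)} (h1 : EvenShapeWilfEquiv α β)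
    (h2 : ShapeWilfEquiv α β) (hlam : Antitone lam) (hk : 0 < k) (F : Fin n → Option (Fin n)) :
    eavFiber lam σ (directSum α σ) F = eavFiber lam σ (directSum β σ) F := by
  by_cases hF : ∃ π, IsTransversal lam π ∧ outside lam σ π = F
  · obtain ⟨π, hπ, rfl⟩ := hF
    let S : Fiber lam σ := ⟨π, hπ⟩
    exact (S.eavFiber_directSum_eq hlam hk α).trans <|
      (savOfSign_eq_of_wilfEquiv h1 h2 (S.shape_antitone hlam) _).trans
        (S.eavFiber_directSum_eq hlam hk β).symm
  · have hempty (γ : Perm (Fin k)) : eavFiber lam σ (directSum γ σ) F = 0 :=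
      Nat.card_eq_zero.2 (Or.inl ⟨fun π => hF ⟨π, π.2.1.1, π.2.2⟩⟩)
    rw [hempty, hempty]

end ShapeWilf

/-- If `α` and `β` are both even-shape-Wilf-equivalent and shape-Wilf-equivalent, then
`α ⊕ σ` and `β ⊕ σ` are even-shape-Wilf-equivalent, for every pattern `σ`. -/
theorem stmt9 (k m : ℕ) (α β : Equiv.Perm (Fin k)) (σ : Equiv.Perm (Fin m))
    (h1 : EvenShapeWilfEquiv α β) (h2 : ShapeWilfEquiv α β) :
    EvenShapeWilfEquiv (directSum α σ) (directSum β σ) := by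
  intro n lam hlam
  rcases Nat.eq_zero_or_pos k with rfl | hk
  · rw [Subsingleton.elim α β]
  · rw [ShapeWilf.eavShape_eq_sum_eavFiber lam σ, ShapeWilf.eavShape_eq_sum_eavFiber lam σ]
    exact Finset.sum_congr rfl fun F _ =>
      ShapeWilf.eavFiber_directSum_eq_of_wilfEquiv h1 h2 hlam hk F
end
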